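/- Let L be an e-cyclic residuated lattice. For u, x ∈ L define λ_u(x) = (u\(x·u)) ∧ e and ρ_u(x) = ((u·x)/u) ∧ e. Then the following are equivalent: (1) every convex subalgebra of L is normal (L is Hamiltonian); (2) for all a ∈ L with a ≤ e and all b ∈ L, there exist m, n ∈ ℕ such that a^m ≤ λ_b(a) and a^n ≤ ρ_b(a); (3) for all a, b ∈ L, there exist m, n ∈ ℕ such that (a ∧ e)^m ≤ λ_b(a) and (a ∧ e)^n ≤ ρ_b(a); (4) for all a, b ∈ L, there exist m, n ∈ ℕ such that |a|^m ≤ λ_b(a) and |a|^n ≤ ρ_b(a). -/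

import Mathlib

/-!
For a negative element `a`, the set of `x` with `a ^ n ≤ |x|` for some `n` is a convex
subalgebra containing `a`; closure under the residuals is where e-cyclicity is needed, since
`u ≤ |x|` must also give `x · u ≤ e`. Normality of this subalgebra yields `(2)`, which implies
`(3)` and `(4)` by monotonicity of `λ_b`, `ρ_b` and of powers. Conversely, under `(4)` the
conjugates `λ_y(x)`, `ρ_y(x)` lie between a power of `|x|` and `e`, hence in every convex
subalgebra containing `x`.
-/

universe u

/-- A residuated lattice: a lattice-ordered monoid with left and right residuals.
`ldiv x z` is `x \ z` and `rdiv z y` is `z / y`. -/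
class ResiduatedLattice (α : Type u) extends Lattice α, Monoid α where
  ldiv : α → α → α
  rdiv : α → α → α
  mul_le_iff_le_ldiv : ∀ x y z : α, x * y ≤ z ↔ y ≤ ldiv x z
  mul_le_iff_le_rdiv : ∀ x y z : α, x * y ≤ z ↔ x ≤ rdiv z y

namespace ResiduatedLattice

variable {α : Type u} [ResiduatedLattice α]

/-- `L` is e-cyclic if `x \ e = e / x` for all `x`. -/
def ECyclic (α : Type u) [ResiduatedLattice α] : Prop :=
  ∀ x : α, ldiv x 1 = rdiv 1 x

/-- Absolute value: `|x| = x ⊓ (e / x) ⊓ e`. -/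
def absv (x : α) : α := x ⊓ rdiv 1 x ⊓ 1

/-- A convex subalgebra: contains `e`, closed under all the operations, and order-convex. -/
structure IsConvexSubalgebra (H : Set α) : Prop where
  one_mem : (1 : α) ∈ H
  mul_mem : ∀ ⦃x⦄, x ∈ H → ∀ ⦃y⦄, y ∈ H → x * y ∈ H
  sup_mem : ∀ ⦃x⦄, x ∈ H → ∀ ⦃y⦄, y ∈ H → x ⊔ y ∈ H
  inf_mem : ∀ ⦃x⦄, x ∈ H → ∀ ⦃y⦄, y ∈ H → x ⊓ y ∈ H
  ldiv_mem : ∀ ⦃x⦄, x ∈ H → ∀ ⦃y⦄, y ∈ H → ldiv x y ∈ H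
  rdiv_mem : ∀ ⦃x⦄, x ∈ H → ∀ ⦃y⦄, y ∈ H → rdiv x y ∈ H
  convex : ∀ ⦃a⦄, a ∈ H → ∀ ⦃b⦄, b ∈ H → ∀ ⦃x⦄, a ≤ x → x ≤ b → x ∈ H

/-- `C[S]`: the smallest convex subalgebra containing `S`. -/
def convexClosure (S : Set α) : Set α :=
  ⋂₀ {H : Set α | IsConvexSubalgebra H ∧ S ⊆ H}

end ResiduatedLattice

open ResiduatedLattice

/-- Left conjugation `λ_u(x) = (u\(x·u)) ⊓ e`. -/
def lam {α : Type u} [ResiduatedLattice α] (u x : α) : α := ldiv u (x * u) ⊓ 1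

/-- Right conjugation `ρ_u(x) = ((u·x)/u) ⊓ e`. -/
def rho {α : Type u} [ResiduatedLattice α] (u x : α) : α := rdiv (u * x) u ⊓ 1

/-- A convex subalgebra is normal if it is closed under conjugation. -/
def IsNormal {α : Type u} [ResiduatedLattice α] (H : Set α) : Prop :=
  ∀ x ∈ H, ∀ y : α, lam y x ∈ H ∧ rho y x ∈ H

namespace ResiduatedLattice

variable {α : Type u} [ResiduatedLattice α]

theorem le_ldiv_iff {x y z : α} : y ≤ ldiv x z ↔ x * y ≤ z :=
  (mul_le_iff_le_ldiv x y z).symm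

theorem le_rdiv_iff {x y z : α} : x ≤ rdiv z y ↔ x * y ≤ z :=
  (mul_le_iff_le_rdiv x y z).symm

theorem mul_ldiv_le (x y : α) : x * ldiv x y ≤ y :=
  le_ldiv_iff.1 le_rfl

theorem rdiv_mul_le (x y : α) : rdiv x y * y ≤ x :=
  le_rdiv_iff.1 le_rfl

instance : MulLeftMono α :=
  ⟨fun _ _ _ h => le_ldiv_iff.1 (h.trans (le_ldiv_iff.2 le_rfl))⟩

instance : MulRightMono α :=
  ⟨fun _ _ _ h => le_rdiv_iff.1 (h.trans (le_rdiv_iff.2 le_rfl))⟩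

theorem ECyclic.le_rdiv_one_iff (hec : ECyclic α) {x z : α} :
    z ≤ rdiv 1 x ↔ x * z ≤ 1 := by
  rw [← hec x, le_ldiv_iff]

theorem le_absv_iff {x z : α} : z ≤ absv x ↔ z ≤ x ∧ z * x ≤ 1 ∧ z ≤ 1 := by
  simp only [absv, le_inf_iff, le_rdiv_iff, and_assoc]

theorem absv_le_self (x : α) : absv x ≤ x :=
  (le_absv_iff.1 le_rfl).1

theorem absv_le_one (x : α) : absv x ≤ 1 :=
  inf_le_right

theorem mul_le_one_of_le_absv {x z : α} (h : z ≤ absv x) : z * x ≤ 1 :=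
  (le_absv_iff.1 h).2.1

theorem ECyclic.self_mul_le_one_of_le_absv (hec : ECyclic α) {x z : α} (h : z ≤ absv x) :
    x * z ≤ 1 :=
  hec.le_rdiv_one_iff.1 (le_rdiv_iff.2 (mul_le_one_of_le_absv h))

theorem le_absv_of_le_one {a : α} (ha : a ≤ 1) : a ≤ absv a :=
  le_absv_iff.2 ⟨le_rfl, mul_le_one' ha ha, ha⟩

theorem absv_le_inf_one (x : α) : absv x ≤ x ⊓ 1 :=
  le_inf (absv_le_self x) (absv_le_one x)

section LowerBounds

variable {u x y : α}

theorem mul_le_absv_mul (hx : u ≤ absv x) (hy : u ≤ absv y) : u * u ≤ absv (x * y) := by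
  have hu : u ≤ 1 := hx.trans (absv_le_one x)
  refine le_absv_iff.2 ⟨mul_le_mul' (hx.trans (absv_le_self x)) (hy.trans (absv_le_self y)),
    ?_, mul_le_one' hu hu⟩
  calc u * u * (x * y) = u * (u * x) * y := by simp only [mul_assoc]
    _ ≤ u * 1 * y := mul_le_mul_left (mul_le_mul_right (mul_le_one_of_le_absv hx) u) y
    _ = u * y := by rw [mul_one]
    _ ≤ 1 := mul_le_one_of_le_absv hy

theorem le_absv_inf (hx : u ≤ absv x) (hy : u ≤ absv y) : u ≤ absv (x ⊓ y) :=
  le_absv_iff.2 ⟨le_inf (hx.trans (absv_le_self x)) (hy.trans (absv_le_self y)),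
    (mul_le_mul_right inf_le_left u).trans (mul_le_one_of_le_absv hx),
    hx.trans (absv_le_one x)⟩

theorem le_absv_sup (hx : u ≤ absv x) (hy : u ≤ absv y) : u ≤ absv (x ⊔ y) :=
  le_absv_iff.2 ⟨(hx.trans (absv_le_self x)).trans le_sup_left,
    le_ldiv_iff.1 (sup_le (le_ldiv_iff.2 (mul_le_one_of_le_absv hx))
      (le_ldiv_iff.2 (mul_le_one_of_le_absv hy))),
    hx.trans (absv_le_one x)⟩

theorem le_absv_of_le_of_le {a b : α} (ha : u ≤ absv a) (hb : u ≤ absv b) (hax : a ≤ x)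
    (hxb : x ≤ b) : u ≤ absv x :=
  le_absv_iff.2 ⟨(ha.trans (absv_le_self a)).trans hax,
    (mul_le_mul_right hxb u).trans (mul_le_one_of_le_absv hb), ha.trans (absv_le_one a)⟩

theorem ECyclic.mul_le_absv_ldiv (hec : ECyclic α) (hx : u ≤ absv x) (hy : u ≤ absv y) :
    u * u ≤ absv (ldiv x y) := by
  have hu : u ≤ 1 := hx.trans (absv_le_one x)
  refine le_absv_iff.2 ⟨le_ldiv_iff.2 ?_, ?_, mul_le_one' hu hu⟩
  · calc x * (u * u) = x * u * u := (mul_assoc x u u).symm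
      _ ≤ 1 * u := mul_le_mul_left (hec.self_mul_le_one_of_le_absv hx) u
      _ = u := one_mul u
      _ ≤ y := hy.trans (absv_le_self y)
  · calc u * u * ldiv x y = u * (u * ldiv x y) := mul_assoc u u _
      _ ≤ u * (x * ldiv x y) :=
          mul_le_mul_right (mul_le_mul_left (hx.trans (absv_le_self x)) _) u
      _ ≤ u * y := mul_le_mul_right (mul_ldiv_le x y) u
      _ ≤ 1 := mul_le_one_of_le_absv hy

theorem ECyclic.mul_le_absv_rdiv (hec : ECyclic α) (hx : u ≤ absv x) (hy : u ≤ absv y) :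
    u * u ≤ absv (rdiv x y) := by
  have hu : u ≤ 1 := hx.trans (absv_le_one x)
  refine le_absv_iff.2 ⟨le_rdiv_iff.2 ?_, le_rdiv_iff.1 (hec.le_rdiv_one_iff.2 ?_),
    mul_le_one' hu hu⟩
  · calc u * u * y = u * (u * y) := mul_assoc u u y
      _ ≤ u * 1 := mul_le_mul_right (mul_le_one_of_le_absv hy) u
      _ = u := mul_one u
      _ ≤ x := hx.trans (absv_le_self x)
  · calc rdiv x y * (u * u) = rdiv x y * u * u := (mul_assoc _ u u).symm
      _ ≤ rdiv x y * y * u :=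
          mul_le_mul_left (mul_le_mul_right (hy.trans (absv_le_self y)) _) u
      _ ≤ x * u := mul_le_mul_left (rdiv_mul_le x y) u
      _ ≤ 1 := hec.self_mul_le_one_of_le_absv hx

end LowerBounds

/-- For `a ≤ e` this is the convex subalgebra generated by `a`. -/
def principalConvex (a : α) : Set α := {x | ∃ n, a ^ n ≤ absv x}

theorem mem_principalConvex_self {a : α} (ha : a ≤ 1) : a ∈ principalConvex a :=
  ⟨1, by rw [pow_one]; exact le_absv_of_le_one ha⟩

theorem exists_pow_le_absv_of_mem_principalConvex {a x y : α} (ha : a ≤ 1)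
    (hx : x ∈ principalConvex a) (hy : y ∈ principalConvex a) :
    ∃ n, a ^ n ≤ absv x ∧ a ^ n ≤ absv y := by
  obtain ⟨m, hm⟩ := hx
  obtain ⟨n, hn⟩ := hy
  exact ⟨max m n, (pow_le_pow_right_of_le_one' ha (le_max_left m n)).trans hm,
    (pow_le_pow_right_of_le_one' ha (le_max_right m n)).trans hn⟩

theorem ECyclic.isConvexSubalgebra_principalConvex (hec : ECyclic α) {a : α} (ha : a ≤ 1) :
    IsConvexSubalgebra (principalConvex a) := by
  have bound {x y : α} (hx : x ∈ principalConvex a) (hy : y ∈ principalConvex a) :=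
    exists_pow_le_absv_of_mem_principalConvex ha hx hy
  refine ⟨⟨0, by rw [pow_zero]; exact le_absv_of_le_one le_rfl⟩, ?_, ?_, ?_, ?_, ?_, ?_⟩
  · intro x hx y hy
    obtain ⟨n, hxn, hyn⟩ := bound hx hy
    exact ⟨n + n, (pow_add a n n).symm ▸ mul_le_absv_mul hxn hyn⟩
  · intro x hx y hy
    obtain ⟨n, hxn, hyn⟩ := bound hx hy
    exact ⟨n, le_absv_sup hxn hyn⟩
  · intro x hx y hy
    obtain ⟨n, hxn, hyn⟩ := bound hx hy
    exact ⟨n, le_absv_inf hxn hyn⟩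
  · intro x hx y hy
    obtain ⟨n, hxn, hyn⟩ := bound hx hy
    exact ⟨n + n, (pow_add a n n).symm ▸ hec.mul_le_absv_ldiv hxn hyn⟩
  · intro x hx y hy
    obtain ⟨n, hxn, hyn⟩ := bound hx hy
    exact ⟨n + n, (pow_add a n n).symm ▸ hec.mul_le_absv_rdiv hxn hyn⟩
  · intro b hb c hc x hbx hxc
    obtain ⟨n, hbn, hcn⟩ := bound hb hc
    exact ⟨n, le_absv_of_le_of_le hbn hcn hbx hxc⟩

theorem IsConvexSubalgebra.pow_mem {H : Set α} (hH : IsConvexSubalgebra H) {x : α}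
    (hx : x ∈ H) : ∀ n : ℕ, x ^ n ∈ H
  | 0 => (pow_zero x).symm ▸ hH.one_mem
  | n + 1 => (pow_succ x n).symm ▸ hH.mul_mem (hH.pow_mem hx n) hx

theorem IsConvexSubalgebra.absv_mem {H : Set α} (hH : IsConvexSubalgebra H) {x : α}
    (hx : x ∈ H) : absv x ∈ H :=
  hH.inf_mem (hH.inf_mem hx (hH.rdiv_mem hH.one_mem hx)) hH.one_mem

theorem IsConvexSubalgebra.mem_of_pow_le {H : Set α} (hH : IsConvexSubalgebra H) {x z : α}
    (hx : x ∈ H) {n : ℕ} (hz : x ^ n ≤ z) (hz1 : z ≤ 1) : z ∈ H :=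
  hH.convex (hH.pow_mem hx n) hH.one_mem hz hz1

theorem lam_mono (b : α) : Monotone (lam b) := fun _ _ h =>
  inf_le_inf_right 1 (le_ldiv_iff.2 ((mul_ldiv_le b _).trans (mul_le_mul_left h b)))

theorem rho_mono (b : α) : Monotone (rho b) := fun _ _ h =>
  inf_le_inf_right 1 (le_rdiv_iff.2 ((rdiv_mul_le _ b).trans (mul_le_mul_right h b)))

end ResiduatedLattice

/-- characterizations of Hamiltonian e-cyclic residuated lattices. -/
theorem stmt19 {α : Type u} [ResiduatedLattice α] (hec : ECyclic α) :
    List.TFAE [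
      (∀ H : Set α, IsConvexSubalgebra H → IsNormal H),
      (∀ a : α, a ≤ 1 → ∀ b : α, ∃ m n : ℕ, a ^ m ≤ lam b a ∧ a ^ n ≤ rho b a),
      (∀ a b : α, ∃ m n : ℕ, (a ⊓ 1) ^ m ≤ lam b a ∧ (a ⊓ 1) ^ n ≤ rho b a),
      (∀ a b : α, ∃ m n : ℕ, absv a ^ m ≤ lam b a ∧ absv a ^ n ≤ rho b a)] := by
  tfae_have 1 → 2 := by
    intro hamilton a ha b
    obtain ⟨⟨m, hm⟩, ⟨n, hn⟩⟩ := hamilton _ (hec.isConvexSubalgebra_principalConvex ha) a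
      (mem_principalConvex_self ha) b
    exact ⟨m, n, hm.trans (absv_le_self _), hn.trans (absv_le_self _)⟩
  tfae_have 2 → 3 := by
    intro h a b
    obtain ⟨m, n, hm, hn⟩ := h (a ⊓ 1) inf_le_right b
    exact ⟨m, n, hm.trans (lam_mono b inf_le_left), hn.trans (rho_mono b inf_le_left)⟩
  tfae_have 3 → 4 := by
    intro h a b
    obtain ⟨m, n, hm, hn⟩ := h a b
    exact ⟨m, n, (pow_le_pow_left' (absv_le_inf_one a) m).trans hm,
      (pow_le_pow_left' (absv_le_inf_one a) n).trans hn⟩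
  tfae_have 4 → 1 := by
    intro h H hH x hx y
    obtain ⟨m, n, hm, hn⟩ := h x y
    exact ⟨hH.mem_of_pow_le (hH.absv_mem hx) hm inf_le_right,
      hH.mem_of_pow_le (hH.absv_mem hx) hn inf_le_right⟩
  tfae_finish
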